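/- For 0 < q < 1, α > −1, n ∈ ℕ, and 0 ≤ k ≤ ⌊n/2⌋ − 1, one has |((q;q)_∞/(q;q)_{n−k}) · ((q^{α+1};q)_n/(q^{α+1};q)_{n−k}) − 1| ≤ 7 (−q²;q)_∞² q^{n/2} / ((1−q)³ (q;q)_∞). -/

import Mathlib

set_option maxHeartbeats 1000000
set_option maxHeartbeats 1000000

open Finset Filter

section helpers

lemma cube_le_self (u : ℝ) (h0 : 0 ≤ u) (h1 : u ≤ 1) : u ^ 3 ≤ u := by
  nlinarith [mul_nonneg (mul_nonneg h0 (sub_nonneg.2 h1)) (by linarith : (0:ℝ) ≤ 1 + u)]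

lemma weier (f : ℕ → ℝ) (h0 : ∀ j, 0 ≤ f j) (h1 : ∀ j, f j ≤ 1) (m : ℕ) :
    1 - ∑ j ∈ Finset.range m, f j ≤ ∏ j ∈ Finset.range m, (1 - f j) := by
  induction m with
  | zero => simp
  | succ m ih =>
    rw [Finset.sum_range_succ, Finset.prod_range_succ]
    have hP0 : 0 ≤ ∏ j ∈ Finset.range m, (1 - f j) :=
      Finset.prod_nonneg fun j _ => by linarith [h1 j]
    have hP1 : ∏ j ∈ Finset.range m, (1 - f j) ≤ 1 :=
      Finset.prod_le_one (fun j _ => by linarith [h1 j]) (fun j _ => by linarith [h0 j])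
    nlinarith [h0 m, h1 m]

variable {q x : ℝ}

lemma factor_pos (hq0 : 0 < q) (hq1 : q < 1) (hx : |x| < 1) (j : ℕ) : 0 < 1 - x * q ^ j := by
  have h1 : |x * q ^ j| = |x| * q ^ j := by
    rw [abs_mul, abs_pow, abs_of_pos hq0]
  have hpj : q ^ j ≤ 1 := pow_le_one₀ hq0.le hq1.le
  have hpj0 : (0:ℝ) < q ^ j := pow_pos hq0 j
  have : |x * q ^ j| < 1 := by
    rw [h1]
    calc |x| * q ^ j ≤ |x| * 1 := by nlinarith [abs_nonneg x]
    _ < 1 := by simpa using hx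
  have := abs_lt.mp this
  linarith [this.1, this.2]

lemma summable_log (hq0 : 0 < q) (hq1 : q < 1) (hx : |x| < 1) :
    Summable fun j : ℕ => Real.log (1 - x * q ^ j) := by
  apply Summable.of_abs
  refine Summable.of_nonneg_of_le (fun j => abs_nonneg _) (fun j => ?_)
    ((summable_geometric_of_lt_one hq0.le hq1).mul_left (|x| / (1 - |x|)))
  · 
    set t := x * q ^ j with ht
    have hpj : q ^ j ≤ 1 := pow_le_one₀ hq0.le hq1.le
    have hpj0 : (0:ℝ) < q ^ j := pow_pos hq0 j
    have habs : |t| = |x| * q ^ j := by rw [ht, abs_mul, abs_pow, abs_of_pos hq0]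
    have htx : |t| ≤ |x| := by rw [habs]; nlinarith [abs_nonneg x]
    have hpos : 0 < 1 - t := factor_pos hq0 hq1 hx j
    have hxx : 0 < 1 - |x| := by linarith
    have habs' := abs_le.mp (le_refl |t|)
    have hup : Real.log (1 - t) ≤ |x| / (1 - |x|) * q ^ j := by
      have := Real.log_le_sub_one_of_pos hpos
      have h2 : -t ≤ |t| := neg_le_abs t
      have h3 : |t| ≤ |x| / (1 - |x|) * q ^ j := by
        rw [habs, div_mul_eq_mul_div, le_div_iff₀ hxx]
        nlinarith [abs_nonneg x]
      linarith
    have hlo : -(|x| / (1 - |x|) * q ^ j) ≤ Real.log (1 - t) := by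
      have h1 : -Real.log (1 - t) = Real.log (1 - t)⁻¹ := (Real.log_inv _).symm
      have h2 : Real.log (1 - t)⁻¹ ≤ (1 - t)⁻¹ - 1 :=
        Real.log_le_sub_one_of_pos (by positivity)
      have ht1 : t ≤ |t| := le_abs_self t
      have ht2 : -|t| ≤ t := neg_abs_le t
      have h1x : 1 - |x| ≤ 1 - t := by linarith [htx, ht2]
      have h3 : (1 - t)⁻¹ - 1 ≤ |x| / (1 - |x|) * q ^ j := by
        have e : (1 - t)⁻¹ - 1 = t / (1 - t) := by
          field_simp
          ring
        rw [e, div_mul_eq_mul_div, div_le_div_iff₀ hpos hxx]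
        nlinarith [mul_nonneg (sub_nonneg.2 ht1) hxx.le,
          mul_nonneg (mul_nonneg (abs_nonneg x) hpj0.le) (sub_nonneg.2 h1x), habs]
      linarith
    rw [abs_le]
    exact ⟨hlo, hup⟩

lemma hasProd_one_sub (hq0 : 0 < q) (hq1 : q < 1) (hx : |x| < 1) :
    HasProd (fun j : ℕ => 1 - x * q ^ j)
      (Real.exp (∑' j : ℕ, Real.log (1 - x * q ^ j))) := by
  have h := (summable_log hq0 hq1 hx).hasSum.rexp
  have he : (Real.exp ∘ fun j : ℕ => Real.log (1 - x * q ^ j)) =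
      fun j : ℕ => 1 - x * q ^ j :=
    funext fun j => Real.exp_log (factor_pos hq0 hq1 hx j)
  rwa [he] at h

lemma tprod_pos (hq0 : 0 < q) (hq1 : q < 1) (hx : |x| < 1) :
    0 < ∏' j : ℕ, (1 - x * q ^ j) := by
  rw [(hasProd_one_sub hq0 hq1 hx).tprod_eq]
  exact Real.exp_pos _

lemma one_sub_le_prod_range (hq0 : 0 < q) (hq1 : q < 1) (hx0 : 0 ≤ x) (hx : x < 1) (m : ℕ) :
    1 - x / (1 - q) ≤ ∏ j ∈ Finset.range m, (1 - x * q ^ j) := by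
  have h1 : 1 - ∑ j ∈ Finset.range m, x * q ^ j ≤ ∏ j ∈ Finset.range m, (1 - x * q ^ j) := by
    apply weier
    · intro j; positivity
    · intro j
      have : q ^ j ≤ 1 := pow_le_one₀ hq0.le hq1.le
      nlinarith
  have h2 : ∑ j ∈ Finset.range m, x * q ^ j ≤ x / (1 - q) := by
    rw [← Finset.mul_sum]
    have hgs : ∑ j ∈ Finset.range m, q ^ j = (1 - q ^ m) / (1 - q) := by
      rw [geom_sum_eq (ne_of_lt hq1), ← neg_div_neg_eq]; ring_nf
    rw [hgs]
    have hqm : 0 < q ^ m := pow_pos hq0 m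
    have hq1' : (0:ℝ) < 1 - q := by linarith
    rw [mul_div_assoc', div_le_div_iff₀ hq1' hq1']
    nlinarith [mul_nonneg (mul_nonneg hx0 hq1'.le) hqm.le]
  linarith

lemma one_sub_le_tprod (hq0 : 0 < q) (hq1 : q < 1) (hx0 : 0 ≤ x) (hx : x < 1) :
    1 - x / (1 - q) ≤ ∏' j : ℕ, (1 - x * q ^ j) := by
  have hx' : |x| < 1 := by rwa [abs_of_nonneg hx0]
  have hp := hasProd_one_sub hq0 hq1 hx'
  rw [hp.tprod_eq]
  exact ge_of_tendsto' hp.tendsto_prod_nat fun m => one_sub_le_prod_range hq0 hq1 hx0 hx m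

lemma tprod_le_one' (hq0 : 0 < q) (hq1 : q < 1) (hx0 : 0 ≤ x) (hx : x < 1) :
    ∏' j : ℕ, (1 - x * q ^ j) ≤ 1 := by
  have hx' : |x| < 1 := by rwa [abs_of_nonneg hx0]
  have hp := hasProd_one_sub hq0 hq1 hx'
  rw [hp.tprod_eq]
  refine le_of_tendsto' hp.tendsto_prod_nat fun s => ?_
  apply Finset.prod_le_one
  · intro j _; exact (factor_pos hq0 hq1 hx' j).le
  · intro j _; nlinarith [mul_nonneg hx0 (pow_pos hq0 j).le]

lemma one_le_tprod' (hq0 : 0 < q) (hq1 : q < 1) (hx1 : -1 < x) (hx0 : x ≤ 0) :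
    1 ≤ ∏' j : ℕ, (1 - x * q ^ j) := by
  have hx' : |x| < 1 := abs_lt.2 ⟨hx1, by linarith⟩
  have hp := hasProd_one_sub hq0 hq1 hx'
  rw [hp.tprod_eq]
  refine ge_of_tendsto' hp.tendsto_prod_nat fun s => ?_
  calc (1:ℝ) = ∏ _j ∈ Finset.range s, (1:ℝ) := by simp
    _ ≤ ∏ j ∈ Finset.range s, (1 - x * q ^ j) := by
        refine Finset.prod_le_prod (by intros; norm_num) fun j _ => ?_
        nlinarith [mul_nonpos_of_nonpos_of_nonneg hx0 (pow_pos hq0 j).le]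

end helpers

/-- Finite q-Pochhammer symbol `(x;q)_n = ∏_{j=0}^{n-1} (1 - x q^j)`. -/
noncomputable def qPoch (q x : ℝ) (n : ℕ) : ℝ := ∏ j ∈ Finset.range n, (1 - x * q ^ j)

/-- Infinite q-Pochhammer symbol `(x;q)_∞ = ∏_{j=0}^∞ (1 - x q^j)`. -/
noncomputable def qPochInf (q x : ℝ) : ℝ := ∏' j : ℕ, (1 - x * q ^ j)

theorem ratio_close_to_one (q α : ℝ) (hq0 : 0 < q) (hq1 : q < 1) (hα : -1 < α)
    (n k : ℕ) (hk : k + 1 ≤ n / 2) :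
    |qPochInf q q / qPoch q q (n - k) *
        (qPoch q (q ^ (α + 1)) n / qPoch q (q ^ (α + 1)) (n - k)) - 1| ≤
      7 * qPochInf q (-(q ^ 2)) ^ 2 * q ^ ((n : ℝ) / 2) /
        ((1 - q) ^ 3 * qPochInf q q) := by
  have hq1' : (0:ℝ) < 1 - q := by linarith
  set a : ℝ := q ^ (α + 1) with ha_def
  have ha0 : 0 < a := Real.rpow_pos_of_pos hq0 _
  have ha1 : a < 1 := Real.rpow_lt_one hq0.le hq1 (by linarith)
  have hqabs : |q| < 1 := by rw [abs_of_pos hq0]; exact hq1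
  have haabs : |a| < 1 := by rw [abs_of_pos ha0]; exact ha1
  set m := n - k with hm_def
  have hmk : n = m + k := by omega
  have h2m : n ≤ 2 * m := by omega
  have hqm0 : (0:ℝ) < q ^ m := pow_pos hq0 m
  have hqm1 : q ^ m ≤ 1 := pow_le_one₀ hq0.le hq1.le
  set x1 : ℝ := q * q ^ m with hx1_def
  set x2 : ℝ := a * q ^ m with hx2_def
  have hx1_0 : 0 ≤ x1 := by positivity
  have hx1q : x1 ≤ q ^ m := by nlinarith
  have hx1_lt : x1 < 1 := by nlinarith
  have hx2_0 : 0 ≤ x2 := by positivity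
  have hx2q : x2 ≤ q ^ m := by nlinarith
  have hx2_lt : x2 < 1 := by nlinarith
  have habs1 : |x1| < 1 := by rw [abs_of_nonneg hx1_0]; exact hx1_lt
  set T : ℝ := ∏' j : ℕ, (1 - x1 * q ^ j) with hT_def
  set F : ℝ := ∏ j ∈ Finset.range k, (1 - x2 * q ^ j) with hF_def
  -- splitting the infinite product
  have hfeq : (fun j : ℕ => 1 - q * q ^ (j + m)) = fun j : ℕ => 1 - x1 * q ^ j := by
    funext j; rw [pow_add, hx1_def]; ring
  have hmult : Multipliable fun j : ℕ => 1 - q * q ^ (j + m) := by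
    rw [hfeq]; exact (hasProd_one_sub hq0 hq1 habs1).multipliable
  have hshift : ∏' j : ℕ, (1 - q * q ^ (j + m)) = T := by rw [hfeq]
  have hsplit : qPochInf q q = qPoch q q m * T := by
    rw [qPochInf, qPoch, ← Multipliable.prod_mul_tprod_nat_mul' hmult, hshift]
  have hqpoch_pos : 0 < qPoch q q m :=
    Finset.prod_pos fun j _ => factor_pos hq0 hq1 hqabs j
  have hTdiv : qPochInf q q / qPoch q q m = T := by
    rw [hsplit, mul_comm, mul_div_assoc, div_self (ne_of_gt hqpoch_pos), mul_one]
  -- splitting the finite product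
  have hFsplit : qPoch q a n = qPoch q a m * F := by
    have h1 : qPoch q a n = qPoch q a (m + k) := by rw [← hmk]
    rw [h1, qPoch, qPoch, Finset.prod_range_add, hF_def]
    congr 1
    refine Finset.prod_congr rfl fun j _ => ?_
    rw [pow_add, hx2_def]; ring
  have hqpochA_pos : 0 < qPoch q a m :=
    Finset.prod_pos fun j _ => factor_pos hq0 hq1 haabs j
  have hFdiv : qPoch q a n / qPoch q a m = F := by
    rw [hFsplit, mul_comm, mul_div_assoc, div_self (ne_of_gt hqpochA_pos), mul_one]
  -- bounds on T and F
  have hT0 : 0 < T := tprod_pos hq0 hq1 habs1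
  have hT1 : T ≤ 1 := by
    rw [hT_def]; exact tprod_le_one' hq0 hq1 hx1_0 hx1_lt
  have hTlo : 1 - q ^ m / (1 - q) ≤ T := by
    have h1 := one_sub_le_tprod hq0 hq1 hx1_0 hx1_lt
    have h2 : x1 / (1 - q) ≤ q ^ m / (1 - q) := by
      exact (div_le_div_iff_of_pos_right hq1').mpr hx1q
    linarith
  have hF0 : 0 ≤ F := Finset.prod_nonneg fun j _ =>
    (factor_pos hq0 hq1 (by rw [abs_of_nonneg hx2_0]; exact hx2_lt) j).le
  have hF1 : F ≤ 1 := Finset.prod_le_one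
    (fun j _ => (factor_pos hq0 hq1 (by rw [abs_of_nonneg hx2_0]; exact hx2_lt) j).le)
    (fun j _ => sub_le_self _ (by positivity))
  have hFlo : 1 - q ^ m / (1 - q) ≤ F := by
    have h1 := one_sub_le_prod_range hq0 hq1 hx2_0 hx2_lt k
    have h2 : x2 / (1 - q) ≤ q ^ m / (1 - q) := by
      exact (div_le_div_iff_of_pos_right hq1').mpr hx2q
    rw [hF_def]; linarith
  -- the main bound
  rw [hTdiv, hFdiv]
  have hdd : 2 * q ^ m / (1 - q) = q ^ m / (1 - q) + q ^ m / (1 - q) := by ring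
  have habs_bound : |T * F - 1| ≤ 2 * q ^ m / (1 - q) := by
    have hTF1 : T * F ≤ 1 := by nlinarith
    rw [abs_of_nonpos (by linarith), hdd]
    nlinarith
  -- rpow comparison
  have hrq : q ^ m ≤ q ^ ((n : ℝ) / 2) := by
    rw [← Real.rpow_natCast q m]
    apply Real.rpow_le_rpow_of_exponent_ge hq0 hq1.le
    have h2m' : (n:ℝ) ≤ 2 * (m:ℝ) := by exact_mod_cast h2m
    linarith
  have hs0 : 0 < q ^ ((n : ℝ) / 2) := Real.rpow_pos_of_pos hq0 _
  have hC : (1:ℝ) ≤ qPochInf q (-(q ^ 2)) := by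
    rw [qPochInf]
    exact one_le_tprod' hq0 hq1 (by nlinarith) (by nlinarith [sq_nonneg q])
  have hP0 : 0 < qPochInf q q := by rw [qPochInf]; exact tprod_pos hq0 hq1 hqabs
  have hP1 : qPochInf q q ≤ 1 := by
    rw [qPochInf]; exact tprod_le_one' hq0 hq1 hq0.le hq1
  have hC2 : (1:ℝ) ≤ qPochInf q (-(q ^ 2)) ^ 2 := one_le_pow₀ hC
  calc |T * F - 1| ≤ 2 * q ^ m / (1 - q) := habs_bound
    _ ≤ 2 * q ^ ((n : ℝ) / 2) / (1 - q) := by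
        exact (div_le_div_iff_of_pos_right hq1').mpr (by linarith)
    _ ≤ 7 * qPochInf q (-(q ^ 2)) ^ 2 * q ^ ((n : ℝ) / 2) /
        ((1 - q) ^ 3 * qPochInf q q) := by
        rw [div_le_div_iff₀ hq1' (mul_pos (pow_pos hq1' 3) hP0)]
        have hu1 : 1 - q ≤ 1 := by linarith
        have hcube : (1 - q) ^ 3 ≤ 1 - q := cube_le_self _ hq1'.le hu1
        have h1 : (1 - q) ^ 3 * qPochInf q q ≤ 1 - q :=
          le_trans (mul_le_of_le_one_right (pow_nonneg hq1'.le 3) hP1) hcube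
        calc 2 * q ^ ((n : ℝ) / 2) * ((1 - q) ^ 3 * qPochInf q q)
            ≤ 2 * q ^ ((n : ℝ) / 2) * (1 - q) :=
              mul_le_mul_of_nonneg_left h1 (by positivity)
          _ ≤ 7 * qPochInf q (-(q ^ 2)) ^ 2 * q ^ ((n : ℝ) / 2) * (1 - q) := by
              have h27 : (2:ℝ) ≤ 7 * qPochInf q (-(q ^ 2)) ^ 2 := by linarith
              have hkey := mul_le_mul_of_nonneg_right h27 (mul_nonneg hs0.le hq1'.le)
              calc 2 * q ^ ((n : ℝ) / 2) * (1 - q)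
                  = 2 * (q ^ ((n : ℝ) / 2) * (1 - q)) := by ring
                _ ≤ 7 * qPochInf q (-(q ^ 2)) ^ 2 * (q ^ ((n : ℝ) / 2) * (1 - q)) := hkey
                _ = 7 * qPochInf q (-(q ^ 2)) ^ 2 * q ^ ((n : ℝ) / 2) * (1 - q) := by ring
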